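/- Suppose each f_i is μ-strongly convex and L_i-smooth (with possibly different constants L_i ≥ μ > 0), and let L̄ = (1/n)∑_i L_i. Set c_i = (μn + L_i − μ)/μ and Z = ∑_i c_i, and run k Prox-Finito update steps where the index j at each step is drawn independently with probability p_j = c_j/Z (so E below is the corresponding average over all index sequences, weighted by the product of their probabilities). Then f(w*) − E[B^k(w^k)] ≤ (1 − μ/(μn + L̄ − μ))^k [f(w*) − B^0(w^0)]. -/

import Mathlib

/-!
Write `E_j = f_j - l_j` (`pfGap`) for the gap between a summand and its lower bound. It is
convex, `(L_j - μ)`-smooth and minimal (zero) at `φ_j`, hence `‖∇E_j‖² ≤ 2 (L_j - μ) E_j`.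
Since the Prox-Finito objective is `E_j + n B`, optimality of the new entry `z` reads
`∇E_j(z) = μn (w - z)`; so the new minimizer is `z` and the step raises the lower bound by
`μ/2 ‖z - w‖² + E_j(z)/n`. Convexity of `E_j` from `w*` to `w`, smoothness from `z` to `w`
and the gradient bound at `z` show that this gain, weighted by `p_j ∝ μn + L_j - μ`, is at
least `c/n (E_j(w*) + ⟪∇E_j(w*), w - w*⟫)` with `c = μ / (μn + L̄ - μ)`. Summed over `j`,
with `∑ ∇f_j(w*) = 0`, the right side is at least `c (f(w*) - B(w))`: one expected step
contracts `f(w*) - B(w)` by `1 - c`, and the theorem follows by induction on `k`.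
-/

open scoped RealInnerProductSpace

/-- The strong-convexity lower bound `l_i` attached to table entry `φ i`. -/
noncomputable def pfL (d n : ℕ) (μ : ℝ)
    (f : Fin n → EuclideanSpace ℝ (Fin d) → ℝ)
    (f' : Fin n → EuclideanSpace ℝ (Fin d) → EuclideanSpace ℝ (Fin d))
    (φ : Fin n → EuclideanSpace ℝ (Fin d)) (i : Fin n)
    (x : EuclideanSpace ℝ (Fin d)) : ℝ :=
  f i (φ i) + ⟪f' i (φ i), x - φ i⟫ + μ / 2 * ‖x - φ i‖ ^ 2

/-- The global lower bound `B` associated with a table `φ`. -/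
noncomputable def pfB (d n : ℕ) (μ : ℝ)
    (f : Fin n → EuclideanSpace ℝ (Fin d) → ℝ)
    (f' : Fin n → EuclideanSpace ℝ (Fin d) → EuclideanSpace ℝ (Fin d))
    (φ : Fin n → EuclideanSpace ℝ (Fin d))
    (x : EuclideanSpace ℝ (Fin d)) : ℝ :=
  (1 / (n : ℝ)) * ∑ i, pfL d n μ f f' φ i x

/-- The minimizer of the global lower bound `B` associated with a table `φ`. -/
noncomputable def pfW (d n : ℕ) (μ : ℝ)
    (f' : Fin n → EuclideanSpace ℝ (Fin d) → EuclideanSpace ℝ (Fin d))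
    (φ : Fin n → EuclideanSpace ℝ (Fin d)) : EuclideanSpace ℝ (Fin d) :=
  (1 / (n : ℝ)) • ∑ i, φ i - (1 / (μ * n)) • ∑ i, f' i (φ i)

/-- The Prox-Finito table after `k` update steps with index sequence `js`, where
`z ψ j` gives the new table entry for an update of table `ψ` at index `j`. -/
noncomputable def pfIter (d n : ℕ)
    (z : (Fin n → EuclideanSpace ℝ (Fin d)) → Fin n → EuclideanSpace ℝ (Fin d))
    (φ0 : Fin n → EuclideanSpace ℝ (Fin d)) (js : ℕ → Fin n) :
    ℕ → Fin n → EuclideanSpace ℝ (Fin d)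
  | 0 => φ0
  | k + 1 =>
      Function.update (pfIter d n z φ0 js k) (js k)
        (z (pfIter d n z φ0 js k) (js k))

/-- Extends a finite index sequence to an infinite one (the tail is irrelevant). -/
def extSeq {n : ℕ} (hn : 0 < n) {k : ℕ} (js : Fin k → Fin n) : ℕ → Fin n :=
  fun t => if h : t < k then js ⟨t, h⟩ else ⟨0, hn⟩

lemma le_two_mul_of_forall_mul_sub_sq_mul_le {X K e : ℝ} (hK : 0 ≤ K)
    (h : ∀ t : ℝ, t * X - K / 2 * t ^ 2 * X ≤ e) : X ≤ 2 * K * e := by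
  rcases hK.eq_or_lt with rfl | hK
  · rw [mul_zero, zero_mul]
    by_contra! hXpos
    have := h ((e + 1) / X)
    rw [div_mul_cancel₀ _ hXpos.ne'] at this
    linarith
  · have := h (1 / K)
    have hval : 1 / K * X - K / 2 * (1 / K) ^ 2 * X = X / (2 * K) := by
      field_simp
      ring
    rw [hval, div_le_iff₀ (by positivity)] at this
    linarith

section QuadraticUpperBound

variable {E : Type*} [NormedAddCommGroup E] [InnerProductSpace ℝ E]

lemma norm_sq_le_of_quadratic_upper_bound {h : E → ℝ} {x g : E} {K m : ℝ} (hK : 0 ≤ K)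
    (hlow : ∀ y, m ≤ h y)
    (hup : ∀ y, h y ≤ h x + ⟪g, y - x⟫ + K / 2 * ‖y - x‖ ^ 2) :
    ‖g‖ ^ 2 ≤ 2 * K * (h x - m) := by
  refine le_two_mul_of_forall_mul_sub_sq_mul_le hK fun t => ?_
  have := (hlow _).trans (hup (x - t • g))
  rw [sub_sub_cancel_left, inner_neg_right, real_inner_smul_right, real_inner_self_eq_norm_sq,
    norm_neg, norm_smul, mul_pow, Real.norm_eq_abs, sq_abs] at this
  linarith

lemma eq_zero_of_forall_le_of_quadratic_upper_bound {h : E → ℝ} {x g : E} {K : ℝ} (hK : 0 ≤ K)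
    (hmin : ∀ y, h x ≤ h y)
    (hup : ∀ y, h y ≤ h x + ⟪g, y - x⟫ + K / 2 * ‖y - x‖ ^ 2) : g = 0 := by
  have := norm_sq_le_of_quadratic_upper_bound hK hmin hup
  rw [sub_self, mul_zero] at this
  simpa using le_antisymm this (sq_nonneg _)

lemma le_add_inner_add_sq_of_lipschitz_gradient [CompleteSpace E] {g : E → ℝ} {g' : E → E}
    {L : ℝ} (hg : ∀ x, HasGradientAt g (g' x) x) (hL : ∀ x y, ‖g' x - g' y‖ ≤ L * ‖x - y‖)
    (x y : E) : g x ≤ g y + ⟪g' y, x - y⟫ + L / 2 * ‖x - y‖ ^ 2 := by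
  set v := x - y
  set ψ : ℝ → ℝ := fun t => g (y + t • v) - t * ⟪g' y, v⟫ - L / 2 * t ^ 2 * ‖v‖ ^ 2
  have hψ : ∀ t, HasDerivAt ψ (⟪g' (y + t • v), v⟫ - ⟪g' y, v⟫ - L * t * ‖v‖ ^ 2) t := by
    intro t
    have hline : HasDerivAt (fun t : ℝ => y + t • v) v t := by
      simpa using ((hasDerivAt_id t).smul_const v).const_add y
    have hgline := (hasGradientAt_iff_hasFDerivAt.mp (hg (y + t • v))).comp_hasDerivAt t hline
    rw [InnerProductSpace.toDual_apply_apply] at hgline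
    refine ((hgline.sub ((hasDerivAt_id t).mul_const _)).sub
      (((hasDerivAt_pow 2 t).const_mul (L / 2)).mul_const (‖v‖ ^ 2))).congr_deriv ?_
    simp only [Nat.cast_ofNat, Nat.add_one_sub_one, pow_one]
    ring
  have hanti : AntitoneOn ψ (Set.Icc 0 1) := by
    refine antitoneOn_of_hasDerivWithinAt_nonpos (convex_Icc 0 1)
      (fun t _ => (hψ t).continuousAt.continuousWithinAt) (fun t _ => (hψ t).hasDerivWithinAt)
      fun t ht => ?_
    rw [interior_Icc] at ht
    have : ⟪g' (y + t • v), v⟫ - ⟪g' y, v⟫ ≤ L * t * ‖v‖ ^ 2 :=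
      calc ⟪g' (y + t • v), v⟫ - ⟪g' y, v⟫ = ⟪g' (y + t • v) - g' y, v⟫ :=
            (inner_sub_left _ _ _).symm
        _ ≤ ‖g' (y + t • v) - g' y‖ * ‖v‖ := real_inner_le_norm _ _
        _ ≤ L * ‖y + t • v - y‖ * ‖v‖ := by gcongr; exact hL _ _
        _ = L * t * ‖v‖ ^ 2 := by
          rw [add_sub_cancel_left, norm_smul, Real.norm_of_nonneg ht.1.le]
          ring
    linarith
  have := hanti (Set.left_mem_Icc.2 zero_le_one) (Set.right_mem_Icc.2 zero_le_one) zero_le_one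
  norm_num [ψ, v] at this
  linarith

end QuadraticUpperBound

lemma Finset.sum_apply_update_eq {ι α M : Type*} [Fintype ι] [DecidableEq ι] [AddCommGroup M]
    (F : ι → α → M) (φ : ι → α) (j : ι) (y : α) :
    ∑ i, F i (Function.update φ j y i) = ∑ i, F i (φ i) + (F j y - F j (φ j)) := by
  simp only [Function.apply_update F φ j y, Finset.sum_update_of_mem (Finset.mem_univ j)]
  rw [Finset.sum_eq_add_sum_sdiff_singleton_of_mem (Finset.mem_univ j) (fun i => F i (φ i))]
  abel

lemma Finset.sum_mul_sub_eq_sub_sum_mul {ι : Type*} [Fintype ι] {p X : ι → ℝ} (hp : ∑ j, p j = 1)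
    (F : ℝ) : ∑ j, p j * (F - X j) = F - ∑ j, p j * X j := by
  simp only [mul_sub, Finset.sum_sub_distrib, ← Finset.sum_mul, hp, one_mul]

namespace ProxFinito

variable {d n : ℕ} {μ : ℝ} {f : Fin n → EuclideanSpace ℝ (Fin d) → ℝ}
  {f' : Fin n → EuclideanSpace ℝ (Fin d) → EuclideanSpace ℝ (Fin d)}

noncomputable def pfGap (d n : ℕ) (μ : ℝ) (f : Fin n → EuclideanSpace ℝ (Fin d) → ℝ)
    (f' : Fin n → EuclideanSpace ℝ (Fin d) → EuclideanSpace ℝ (Fin d))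
    (φ : Fin n → EuclideanSpace ℝ (Fin d)) (j : Fin n) (x : EuclideanSpace ℝ (Fin d)) : ℝ :=
  f j x - pfL d n μ f f' φ j x

noncomputable def pfGapGrad (d n : ℕ) (μ : ℝ)
    (f' : Fin n → EuclideanSpace ℝ (Fin d) → EuclideanSpace ℝ (Fin d))
    (φ : Fin n → EuclideanSpace ℝ (Fin d)) (j : Fin n) (x : EuclideanSpace ℝ (Fin d)) :
    EuclideanSpace ℝ (Fin d) :=
  f' j x - (f' j (φ j) + μ • (x - φ j))

section Table

variable {L : ℝ} {φ : Fin n → EuclideanSpace ℝ (Fin d)} {j : Fin n}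

lemma pfL_eq_add_inner_add_sq (i : Fin n) (x y : EuclideanSpace ℝ (Fin d)) :
    pfL d n μ f f' φ i x = pfL d n μ f f' φ i y
      + ⟪f' i (φ i) + μ • (y - φ i), x - y⟫ + μ / 2 * ‖x - y‖ ^ 2 := by
  have hd : x - φ i = (x - y) + (y - φ i) := by abel
  rw [pfL, pfL, hd, norm_add_sq_real, inner_add_right, inner_add_left, real_inner_smul_left,
    real_inner_comm (y - φ i) (x - y)]
  ring

lemma pfGap_eq_add_inner_add (a b : EuclideanSpace ℝ (Fin d)) :
    pfGap d n μ f f' φ j b = pfGap d n μ f f' φ j a + ⟪pfGapGrad d n μ f' φ j a, b - a⟫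
      + (f j b - (f j a + ⟪f' j a, b - a⟫) - μ / 2 * ‖b - a‖ ^ 2) := by
  rw [pfGap, pfGap, pfGapGrad, pfL_eq_add_inner_add_sq j b a, inner_sub_left]
  ring

lemma pfGap_self : pfGap d n μ f f' φ j (φ j) = 0 := by
  simp [pfGap, pfL]

lemma pfGapGrad_self : pfGapGrad d n μ f' φ j (φ j) = 0 := by
  simp [pfGapGrad]

lemma pfGap_add_inner_le (hsc : ∀ x y, f j x ≥ f j y + ⟪f' j y, x - y⟫ + μ / 2 * ‖x - y‖ ^ 2)
    (a b : EuclideanSpace ℝ (Fin d)) :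
    pfGap d n μ f f' φ j a + ⟪pfGapGrad d n μ f' φ j a, b - a⟫ ≤ pfGap d n μ f f' φ j b := by
  linarith [pfGap_eq_add_inner_add (f := f) (f' := f') (μ := μ) (φ := φ) (j := j) a b, hsc b a]

lemma pfGap_le_add_inner_add_sq
    (hdesc : ∀ x y, f j x ≤ f j y + ⟪f' j y, x - y⟫ + L / 2 * ‖x - y‖ ^ 2)
    (a b : EuclideanSpace ℝ (Fin d)) :
    pfGap d n μ f f' φ j b ≤ pfGap d n μ f f' φ j a + ⟪pfGapGrad d n μ f' φ j a, b - a⟫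
      + (L - μ) / 2 * ‖b - a‖ ^ 2 := by
  linarith [pfGap_eq_add_inner_add (f := f) (f' := f') (μ := μ) (φ := φ) (j := j) a b, hdesc b a]

lemma pfGap_nonneg (hsc : ∀ x y, f j x ≥ f j y + ⟪f' j y, x - y⟫ + μ / 2 * ‖x - y‖ ^ 2)
    (x : EuclideanSpace ℝ (Fin d)) : 0 ≤ pfGap d n μ f f' φ j x := by
  simpa [pfGap_self, pfGapGrad_self] using pfGap_add_inner_le (φ := φ) hsc (φ j) x

lemma norm_pfGapGrad_sq_le (hμL : μ ≤ L)
    (hsc : ∀ x y, f j x ≥ f j y + ⟪f' j y, x - y⟫ + μ / 2 * ‖x - y‖ ^ 2)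
    (hdesc : ∀ x y, f j x ≤ f j y + ⟪f' j y, x - y⟫ + L / 2 * ‖x - y‖ ^ 2)
    (x : EuclideanSpace ℝ (Fin d)) :
    ‖pfGapGrad d n μ f' φ j x‖ ^ 2 ≤ 2 * (L - μ) * pfGap d n μ f f' φ j x := by
  simpa using norm_sq_le_of_quadratic_upper_bound (sub_nonneg.2 hμL) (pfGap_nonneg hsc)
    (pfGap_le_add_inner_add_sq hdesc x)

lemma sum_pfL_grad (hn : (n : ℝ) ≠ 0) (hμ : μ ≠ 0) (x : EuclideanSpace ℝ (Fin d)) :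
    ∑ i, (f' i (φ i) + μ • (x - φ i)) = (μ * n) • (x - pfW d n μ f' φ) := by
  rw [Finset.sum_add_distrib, ← Finset.smul_sum, Finset.sum_sub_distrib, Finset.sum_const,
    Finset.card_univ, Fintype.card_fin, pfW]
  match_scalars <;> field_simp

lemma pfB_eq_add_inner_add_sq (hn : (n : ℝ) ≠ 0) (hμ : μ ≠ 0) (x y : EuclideanSpace ℝ (Fin d)) :
    pfB d n μ f f' φ x = pfB d n μ f f' φ y + ⟪μ • (y - pfW d n μ f' φ), x - y⟫
      + μ / 2 * ‖x - y‖ ^ 2 := by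
  simp only [pfB, pfL_eq_add_inner_add_sq (φ := φ) _ x y, Finset.sum_add_distrib, ← sum_inner,
    sum_pfL_grad hn hμ, Finset.sum_const, Finset.card_univ, Fintype.card_fin, nsmul_eq_mul,
    real_inner_smul_left]
  field_simp

lemma pfB_eq_pfB_pfW_add_sq (hn : (n : ℝ) ≠ 0) (hμ : μ ≠ 0) (x : EuclideanSpace ℝ (Fin d)) :
    pfB d n μ f f' φ x = pfB d n μ f f' φ (pfW d n μ f' φ)
      + μ / 2 * ‖x - pfW d n μ f' φ‖ ^ 2 := by
  simpa using pfB_eq_add_inner_add_sq (f := f) (f' := f') (φ := φ) hn hμ x (pfW d n μ f' φ)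

lemma add_sum_erase_pfL_eq (hn : (n : ℝ) ≠ 0) (x : EuclideanSpace ℝ (Fin d)) :
    f j x + ∑ i ∈ Finset.univ.erase j, pfL d n μ f f' φ i x
      = pfGap d n μ f f' φ j x + n * pfB d n μ f f' φ x := by
  rw [pfGap, pfB, ← Finset.add_sum_erase _ _ (Finset.mem_univ j)]
  field_simp
  ring

lemma pfB_update_self (y : EuclideanSpace ℝ (Fin d)) :
    pfB d n μ f f' (Function.update φ j y) y
      = pfB d n μ f f' φ y + pfGap d n μ f f' φ j y / n := by
  have hsum : ∑ i, pfL d n μ f f' (Function.update φ j y) i y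
      = ∑ i, pfL d n μ f f' φ i y + (f j y - pfL d n μ f f' φ j y) := by
    have := Finset.sum_apply_update_eq
      (fun i a => f i a + ⟪f' i a, y - a⟫ + μ / 2 * ‖y - a‖ ^ 2) φ j y
    simpa [pfL] using this
  rw [pfB, pfB, pfGap, hsum]
  ring

lemma pfGapGrad_eq_of_forall_le (hn : 0 < n) (hμ : 0 < μ) (hμL : μ ≤ L)
    (hdesc : ∀ x y, f j x ≤ f j y + ⟪f' j y, x - y⟫ + L / 2 * ‖x - y‖ ^ 2)
    {z₀ : EuclideanSpace ℝ (Fin d)}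
    (hz₀ : ∀ y, (1 / (n : ℝ)) * f j z₀
          + (1 / (n : ℝ)) * ∑ i ∈ Finset.univ.erase j, pfL d n μ f f' φ i z₀
        ≤ (1 / (n : ℝ)) * f j y
          + (1 / (n : ℝ)) * ∑ i ∈ Finset.univ.erase j, pfL d n μ f f' φ i y) :
    pfGapGrad d n μ f' φ j z₀ = (μ * n) • (pfW d n μ f' φ - z₀) := by
  have hn' : (0 : ℝ) < n := Nat.cast_pos.2 hn
  set F := fun y => pfGap d n μ f f' φ j y + n * pfB d n μ f f' φ y
  have hmin : ∀ y, F z₀ ≤ F y := fun y => by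
    have := hz₀ y
    rw [← mul_add, ← mul_add, mul_le_mul_iff_right₀ (by positivity),
      add_sum_erase_pfL_eq hn'.ne', add_sum_erase_pfL_eq hn'.ne'] at this
    exact this
  have hup : ∀ y, F y ≤ F z₀ + ⟪pfGapGrad d n μ f' φ j z₀ + (μ * n) • (z₀ - pfW d n μ f' φ),
      y - z₀⟫ + (L - μ + μ * n) / 2 * ‖y - z₀‖ ^ 2 := fun y => by
    have hgap := pfGap_le_add_inner_add_sq (μ := μ) (φ := φ) hdesc z₀ y
    simp only [F, pfB_eq_add_inner_add_sq hn'.ne' hμ.ne' y z₀, inner_add_left,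
      real_inner_smul_left]
    linarith
  have := eq_zero_of_forall_le_of_quadratic_upper_bound (by nlinarith) hmin hup
  rwa [← neg_sub z₀, smul_neg, eq_neg_iff_add_eq_zero]

lemma pfW_update_eq (hn : (n : ℝ) ≠ 0) (hμ : μ ≠ 0) {z₀ : EuclideanSpace ℝ (Fin d)}
    (hQ : pfGapGrad d n μ f' φ j z₀ = (μ * n) • (pfW d n μ f' φ - z₀)) :
    pfW d n μ f' (Function.update φ j z₀) = z₀ := by
  have h := sum_pfL_grad (f' := f') (φ := Function.update φ j z₀) hn hμ z₀
  rw [Finset.sum_apply_update_eq (fun i a => f' i a + μ • (z₀ - a)) φ j z₀,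
    sum_pfL_grad hn hμ, sub_self, smul_zero, add_zero] at h
  change _ + pfGapGrad d n μ f' φ j z₀ = _ at h
  rw [hQ, ← smul_add, sub_add_sub_cancel, sub_self, smul_zero, eq_comm,
    smul_eq_zero_iff_right (mul_ne_zero hμ hn), sub_eq_zero] at h
  exact h.symm

lemma pfB_update_pfW_eq (hn : (n : ℝ) ≠ 0) (hμ : μ ≠ 0) {z₀ : EuclideanSpace ℝ (Fin d)}
    (hQ : pfGapGrad d n μ f' φ j z₀ = (μ * n) • (pfW d n μ f' φ - z₀)) :
    pfB d n μ f f' (Function.update φ j z₀) (pfW d n μ f' (Function.update φ j z₀))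
      = pfB d n μ f f' φ (pfW d n μ f' φ)
        + (μ / 2 * ‖z₀ - pfW d n μ f' φ‖ ^ 2 + pfGap d n μ f f' φ j z₀ / n) := by
  rw [pfW_update_eq hn hμ hQ, pfB_update_self, pfB_eq_pfB_pfW_add_sq hn hμ z₀]
  ring

lemma mul_pfGap_add_inner_le (hμL : μ ≤ L)
    (hsc : ∀ x y, f j x ≥ f j y + ⟪f' j y, x - y⟫ + μ / 2 * ‖x - y‖ ^ 2)
    (hdesc : ∀ x y, f j x ≤ f j y + ⟪f' j y, x - y⟫ + L / 2 * ‖x - y‖ ^ 2)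
    {m : ℝ} (hm : 0 < m) {y z₀ : EuclideanSpace ℝ (Fin d)}
    (hQ : pfGapGrad d n μ f' φ j z₀ = m • (y - z₀)) (x : EuclideanSpace ℝ (Fin d)) :
    m * (pfGap d n μ f f' φ j x + ⟪pfGapGrad d n μ f' φ j x, y - x⟫)
      ≤ (m + (L - μ)) * (m / 2 * ‖z₀ - y‖ ^ 2 + pfGap d n μ f f' φ j z₀) := by
  have hconv := pfGap_add_inner_le (φ := φ) hsc x y
  have hsmooth := pfGap_le_add_inner_add_sq (μ := μ) (φ := φ) hdesc z₀ y
  have hnorm := norm_pfGapGrad_sq_le (φ := φ) hμL hsc hdesc z₀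
  rw [hQ, real_inner_smul_left, real_inner_self_eq_norm_sq] at hsmooth
  rw [hQ, norm_smul, mul_pow, Real.norm_of_nonneg hm.le] at hnorm
  rw [norm_sub_rev z₀ y]
  nlinarith [mul_le_mul_of_nonneg_left (hconv.trans hsmooth) hm.le]

lemma sub_pfB_pfW_eq (hn : (n : ℝ) ≠ 0) (hμ : μ ≠ 0) (x : EuclideanSpace ℝ (Fin d)) :
    (1 / (n : ℝ)) * ∑ i, f i x - pfB d n μ f f' φ (pfW d n μ f' φ)
      = (1 / (n : ℝ)) * ∑ i, pfGap d n μ f f' φ i x + μ / 2 * ‖x - pfW d n μ f' φ‖ ^ 2 := by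
  have := pfB_eq_pfB_pfW_add_sq (f := f) (f' := f') (φ := φ) hn hμ x
  rw [pfB] at this
  simp only [pfGap, Finset.sum_sub_distrib]
  linarith

lemma sum_pfGapGrad (hn : (n : ℝ) ≠ 0) (hμ : μ ≠ 0) (x : EuclideanSpace ℝ (Fin d)) :
    ∑ i, pfGapGrad d n μ f' φ i x = ∑ i, f' i x - (μ * n) • (x - pfW d n μ f' φ) := by
  simp only [pfGapGrad]
  rw [Finset.sum_sub_distrib, sum_pfL_grad hn hμ]

end Table

variable {L : Fin n → ℝ}

lemma sum_grad_eq_zero_of_forall_le (hn : 0 < n) (hL : ∀ i, 0 ≤ L i)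
    (hdesc : ∀ i x y, f i x ≤ f i y + ⟪f' i y, x - y⟫ + L i / 2 * ‖x - y‖ ^ 2)
    {wstar : EuclideanSpace ℝ (Fin d)}
    (hstar : ∀ x, (1 / (n : ℝ)) * ∑ i, f i wstar ≤ (1 / (n : ℝ)) * ∑ i, f i x) :
    ∑ i, f' i wstar = 0 := by
  have hn' : (0 : ℝ) < 1 / n := by positivity
  refine eq_zero_of_forall_le_of_quadratic_upper_bound (h := fun x => ∑ i, f i x)
    (K := ∑ i, L i) (Finset.sum_nonneg fun i _ => hL i)
    (fun y => le_of_mul_le_mul_left (hstar y) hn') fun y => ?_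
  calc ∑ i, f i y ≤ ∑ i, (f i wstar + ⟪f' i wstar, y - wstar⟫ + L i / 2 * ‖y - wstar‖ ^ 2) :=
        Finset.sum_le_sum fun i _ => hdesc i y wstar
    _ = _ := by
      rw [Finset.sum_add_distrib, Finset.sum_add_distrib, ← sum_inner, ← Finset.sum_mul,
        ← Finset.sum_div]

theorem sub_sum_pfB_update_le (hn : 0 < n) (hμ : 0 < μ) (hμL : ∀ i, μ ≤ L i)
    (hsc : ∀ i x y, f i x ≥ f i y + ⟪f' i y, x - y⟫ + μ / 2 * ‖x - y‖ ^ 2)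
    (hdesc : ∀ i x y, f i x ≤ f i y + ⟪f' i y, x - y⟫ + L i / 2 * ‖x - y‖ ^ 2)
    {wstar : EuclideanSpace ℝ (Fin d)} (hwstar : ∑ i, f' i wstar = 0)
    (φ z : Fin n → EuclideanSpace ℝ (Fin d))
    (hz : ∀ j y, (1 / (n : ℝ)) * f j (z j)
          + (1 / (n : ℝ)) * ∑ i ∈ Finset.univ.erase j, pfL d n μ f f' φ i (z j)
        ≤ (1 / (n : ℝ)) * f j y
          + (1 / (n : ℝ)) * ∑ i ∈ Finset.univ.erase j, pfL d n μ f f' φ i y)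
    {c : ℝ} (hc : 0 ≤ c) {p : Fin n → ℝ} (hp : ∀ j, p j * (μ * n) = c * (μ * n + L j - μ))
    (hp1 : ∑ j, p j = 1) :
    (1 / (n : ℝ)) * ∑ i, f i wstar
        - ∑ j, p j * pfB d n μ f f' (Function.update φ j (z j))
            (pfW d n μ f' (Function.update φ j (z j)))
      ≤ (1 - c) * ((1 / (n : ℝ)) * ∑ i, f i wstar - pfB d n μ f f' φ (pfW d n μ f' φ)) := by
  have hn' : (0 : ℝ) < n := Nat.cast_pos.2 hn
  have hμn : 0 < μ * n := mul_pos hμ hn'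
  set w := pfW d n μ f' φ
  have hQ j : pfGapGrad d n μ f' φ j (z j) = (μ * n) • (w - z j) :=
    pfGapGrad_eq_of_forall_le hn hμ (hμL j) (hdesc j) (hz j)
  have hgain j : c / n * (pfGap d n μ f f' φ j wstar + ⟪pfGapGrad d n μ f' φ j wstar, w - wstar⟫)
      ≤ p j * (μ / 2 * ‖z j - w‖ ^ 2 + pfGap d n μ f f' φ j (z j) / n) := by
    refine le_of_mul_le_mul_right ?_ hμn
    calc c / n * (pfGap d n μ f f' φ j wstar + ⟪pfGapGrad d n μ f' φ j wstar, w - wstar⟫)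
          * (μ * n)
        = c * ((μ * n) * (pfGap d n μ f f' φ j wstar
            + ⟪pfGapGrad d n μ f' φ j wstar, w - wstar⟫)) / n := by ring
      _ ≤ c * ((μ * n + (L j - μ)) * (μ * n / 2 * ‖z j - w‖ ^ 2
            + pfGap d n μ f f' φ j (z j))) / n :=
        div_le_div_of_nonneg_right (mul_le_mul_of_nonneg_left
          (mul_pfGap_add_inner_le (hμL j) (hsc j) (hdesc j) hμn (hQ j) wstar) hc) hn'.le
      _ = p j * (μ / 2 * ‖z j - w‖ ^ 2 + pfGap d n μ f f' φ j (z j) / n) * (μ * n) := by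
        rw [add_sub_assoc', ← mul_assoc, ← hp j]
        field_simp
  have hgap_sum : ∑ j, (pfGap d n μ f f' φ j wstar + ⟪pfGapGrad d n μ f' φ j wstar, w - wstar⟫)
      = ∑ j, pfGap d n μ f f' φ j wstar + μ * n * ‖wstar - w‖ ^ 2 := by
    rw [Finset.sum_add_distrib, ← sum_inner, sum_pfGapGrad hn'.ne' hμ.ne', hwstar, zero_sub,
      ← neg_sub w wstar, smul_neg, neg_neg, real_inner_smul_left, real_inner_self_eq_norm_sq,
      norm_neg]
  have hexp : ∑ j, p j * pfB d n μ f f' (Function.update φ j (z j))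
        (pfW d n μ f' (Function.update φ j (z j)))
      = pfB d n μ f f' φ w
        + ∑ j, p j * (μ / 2 * ‖z j - w‖ ^ 2 + pfGap d n μ f f' φ j (z j) / n) := by
    simp only [pfB_update_pfW_eq hn'.ne' hμ.ne' (hQ _), mul_add (p _) (pfB d n μ f f' φ w),
      Finset.sum_add_distrib, ← Finset.sum_mul, hp1, one_mul, w]
  have hgain_sum := Finset.sum_le_sum fun j (_ : j ∈ Finset.univ) => hgain j
  rw [← Finset.mul_sum, hgap_sum] at hgain_sum
  have hD := sub_pfB_pfW_eq (f := f) (f' := f') (φ := φ) hn'.ne' hμ.ne' wstar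
  have hslack : c / n * (∑ j, pfGap d n μ f f' φ j wstar + μ * n * ‖wstar - w‖ ^ 2)
      = c * ((1 / n) * ∑ j, pfGap d n μ f f' φ j wstar + μ / 2 * ‖wstar - w‖ ^ 2)
        + c * (μ / 2 * ‖wstar - w‖ ^ 2) := by
    field_simp
    ring
  have := mul_nonneg hc (by positivity : 0 ≤ μ / 2 * ‖wstar - w‖ ^ 2)
  rw [hexp]
  nlinarith

noncomputable def pfExpect (hn : 0 < n)
    (z : (Fin n → EuclideanSpace ℝ (Fin d)) → Fin n → EuclideanSpace ℝ (Fin d))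
    (p : Fin n → ℝ) (V : (Fin n → EuclideanSpace ℝ (Fin d)) → ℝ) (k : ℕ)
    (φ₀ : Fin n → EuclideanSpace ℝ (Fin d)) : ℝ :=
  ∑ js : Fin k → Fin n, (∏ t, p (js t)) * V (pfIter d n z φ₀ (extSeq hn js) k)

lemma pfIter_succ' (z : (Fin n → EuclideanSpace ℝ (Fin d)) → Fin n → EuclideanSpace ℝ (Fin d))
    (φ₀ : Fin n → EuclideanSpace ℝ (Fin d)) (js : ℕ → Fin n) (k : ℕ) :
    pfIter d n z φ₀ js (k + 1)
      = pfIter d n z (Function.update φ₀ (js 0) (z φ₀ (js 0))) (fun t => js (t + 1)) k := by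
  induction k with
  | zero => rfl
  | succ k ih => rw [pfIter, ih]; rfl

lemma extSeq_cons_succ (hn : 0 < n) {k : ℕ} (j : Fin n) (js : Fin k → Fin n) :
    (fun t => extSeq hn (Fin.cons j js : Fin (k + 1) → Fin n) (t + 1)) = extSeq hn js := by
  funext t
  by_cases h : t < k
  · simp only [extSeq, dif_pos (Nat.succ_lt_succ h), dif_pos h]
    exact Fin.cons_succ (α := fun _ => Fin n) j js ⟨t, h⟩
  · simp only [extSeq, dif_neg (fun h' => h (Nat.lt_of_succ_lt_succ h')), dif_neg h]

lemma Fintype.sum_fin_succ_pi {α M : Type*} [Fintype α] [AddCommMonoid M] {k : ℕ}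
    (G : (Fin (k + 1) → α) → M) :
    ∑ js, G js = ∑ j, ∑ js : Fin k → α, G (Fin.cons j js) :=
  ((Fintype.sum_equiv (Fin.consEquiv fun _ => α) _ G fun _ => rfl).symm).trans
    (Fintype.sum_prod_type _)

lemma pfExpect_succ (hn : 0 < n)
    (z : (Fin n → EuclideanSpace ℝ (Fin d)) → Fin n → EuclideanSpace ℝ (Fin d))
    (p : Fin n → ℝ) (V : (Fin n → EuclideanSpace ℝ (Fin d)) → ℝ) (k : ℕ)
    (φ₀ : Fin n → EuclideanSpace ℝ (Fin d)) :
    pfExpect hn z p V (k + 1) φ₀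
      = ∑ j, p j * pfExpect hn z p V k (Function.update φ₀ j (z φ₀ j)) := by
  rw [pfExpect, Fintype.sum_fin_succ_pi]
  refine Finset.sum_congr rfl fun j _ => ?_
  rw [pfExpect, Finset.mul_sum]
  refine Finset.sum_congr rfl fun js _ => ?_
  rw [Fin.prod_univ_succ, pfIter_succ', extSeq_cons_succ]
  simp only [extSeq, Nat.zero_lt_succ, dif_pos, Fin.zero_eta, Fin.cons_zero, Fin.cons_succ]
  ring

theorem sub_pfExpect_le (hn : 0 < n)
    (z : (Fin n → EuclideanSpace ℝ (Fin d)) → Fin n → EuclideanSpace ℝ (Fin d))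
    {p : Fin n → ℝ} (hp0 : ∀ j, 0 ≤ p j) (hp1 : ∑ j, p j = 1)
    {V : (Fin n → EuclideanSpace ℝ (Fin d)) → ℝ} {F ρ : ℝ} (hρ : 0 ≤ ρ)
    (hstep : ∀ φ, F - ∑ j, p j * V (Function.update φ j (z φ j)) ≤ ρ * (F - V φ)) (k : ℕ)
    (φ₀ : Fin n → EuclideanSpace ℝ (Fin d)) :
    F - pfExpect hn z p V k φ₀ ≤ ρ ^ k * (F - V φ₀) := by
  induction k generalizing φ₀ with
  | zero => simp [pfExpect, pfIter]
  | succ k ih =>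
    set φ' := fun j => Function.update φ₀ j (z φ₀ j)
    calc F - pfExpect hn z p V (k + 1) φ₀
        = ∑ j, p j * (F - pfExpect hn z p V k (φ' j)) := by
          rw [pfExpect_succ, Finset.sum_mul_sub_eq_sub_sum_mul hp1]
      _ ≤ ∑ j, p j * (ρ ^ k * (F - V (φ' j))) :=
          Finset.sum_le_sum fun j _ => mul_le_mul_of_nonneg_left (ih _) (hp0 j)
      _ = ρ ^ k * (F - ∑ j, p j * V (φ' j)) := by
          simp only [mul_left_comm (p _), ← Finset.mul_sum, Finset.sum_mul_sub_eq_sub_sum_mul hp1]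
      _ ≤ ρ ^ k * (ρ * (F - V φ₀)) := mul_le_mul_of_nonneg_left (hstep φ₀) (by positivity)
      _ = ρ ^ (k + 1) * (F - V φ₀) := by ring

lemma sum_weights_eq (hn : (n : ℝ) ≠ 0) (hμ : μ ≠ 0) (L : Fin n → ℝ) :
    ∑ i, (μ * n + L i - μ) / μ = n * (μ * n + (1 / (n : ℝ)) * ∑ i, L i - μ) / μ := by
  rw [← Finset.sum_div, Finset.sum_sub_distrib, Finset.sum_add_distrib]
  simp only [Finset.sum_const, Finset.card_univ, Fintype.card_fin, nsmul_eq_mul]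
  field_simp

end ProxFinito

open ProxFinito

theorem prox_finito_weighted_convergence (d n k : ℕ) (hn : 0 < n) (μ : ℝ)
    (L : Fin n → ℝ) (hμ : 0 < μ) (hμL : ∀ i, μ ≤ L i)
    (f : Fin n → EuclideanSpace ℝ (Fin d) → ℝ)
    (f' : Fin n → EuclideanSpace ℝ (Fin d) → EuclideanSpace ℝ (Fin d))
    (hgrad : ∀ i x, HasGradientAt (f i) (f' i x) x)
    (hsmooth : ∀ i x y, ‖f' i x - f' i y‖ ≤ L i * ‖x - y‖)
    (hsc : ∀ i x y, f i x ≥ f i y + ⟪f' i y, x - y⟫ + μ / 2 * ‖x - y‖ ^ 2)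
    (wstar : EuclideanSpace ℝ (Fin d))
    (hstar : ∀ x, (1 / (n : ℝ)) * ∑ i, f i wstar ≤ (1 / (n : ℝ)) * ∑ i, f i x)
    (φ0 : Fin n → EuclideanSpace ℝ (Fin d))
    (z : (Fin n → EuclideanSpace ℝ (Fin d)) → Fin n → EuclideanSpace ℝ (Fin d))
    (hz : ∀ ψ (j : Fin n) (y : EuclideanSpace ℝ (Fin d)),
      (1 / (n : ℝ)) * f j (z ψ j)
          + (1 / (n : ℝ)) * ∑ i ∈ Finset.univ.erase j, pfL d n μ f f' ψ i (z ψ j)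
        ≤ (1 / (n : ℝ)) * f j y
          + (1 / (n : ℝ)) * ∑ i ∈ Finset.univ.erase j, pfL d n μ f f' ψ i y) :
    (1 / (n : ℝ)) * ∑ i, f i wstar
      - ∑ js : Fin k → Fin n,
          (∏ t : Fin k, (((μ * n + L (js t) - μ) / μ) / ∑ i, (μ * n + L i - μ) / μ)) *
            pfB d n μ f f' (pfIter d n z φ0 (extSeq hn js) k)
              (pfW d n μ f' (pfIter d n z φ0 (extSeq hn js) k))
      ≤ (1 - μ / (μ * n + (1 / (n : ℝ)) * ∑ i, L i - μ)) ^ k *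
          ((1 / (n : ℝ)) * ∑ i, f i wstar - pfB d n μ f f' φ0 (pfW d n μ f' φ0)) := by
  have hn' : (0 : ℝ) < n := Nat.cast_pos.2 hn
  have hdesc i := le_add_inner_add_sq_of_lipschitz_gradient (hgrad i) (hsmooth i)
  have hLbar : μ ≤ (1 / (n : ℝ)) * ∑ i, L i := by
    rw [one_div_mul_eq_div, le_div_iff₀ hn', mul_comm]
    simpa using Finset.sum_le_sum fun i (_ : i ∈ Finset.univ) => hμL i
  have hμn : μ ≤ μ * n := le_mul_of_one_le_right hμ.le (Nat.one_le_cast.2 hn)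
  have hden : 0 < μ * n + (1 / (n : ℝ)) * ∑ i, L i - μ := by linarith
  have hZ : 0 < ∑ i, (μ * n + L i - μ) / μ := by
    rw [sum_weights_eq hn'.ne' hμ.ne' L]
    positivity
  set c := μ / (μ * n + (1 / (n : ℝ)) * ∑ i, L i - μ)
  set p : Fin n → ℝ := fun j => ((μ * n + L j - μ) / μ) / ∑ i, (μ * n + L i - μ) / μ
  have hp0 j : 0 ≤ p j := div_nonneg (div_nonneg (by nlinarith [hμL j]) hμ.le) hZ.le
  have hp1 : ∑ j, p j = 1 := by rw [← Finset.sum_div, div_self hZ.ne']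
  have hp j : p j * (μ * n) = c * (μ * n + L j - μ) := by
    simp only [p, c, sum_weights_eq hn'.ne' hμ.ne' L]
    field_simp
  have hwstar := sum_grad_eq_zero_of_forall_le hn (fun i => hμ.le.trans (hμL i)) hdesc hstar
  exact sub_pfExpect_le hn z hp0 hp1 (V := fun φ => pfB d n μ f f' φ (pfW d n μ f' φ))
    (sub_nonneg.2 ((div_le_one hden).2 (by linarith)))
    (fun φ => sub_sum_pfB_update_le hn hμ hμL hsc hdesc hwstar φ (z φ) (hz φ)
      (div_nonneg hμ.le hden.le) hp hp1) k φ0
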